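/- Suppose Q is in rational normal form with parameters z and k_1,…,k_d, and γ is generic. Let α be a normalized 2-cocycle on g(γ,Q) and write α(m)=α(L_m,L_{−m}). Then for every m∈R, α(m)=((m_γ)^3−m_γ)/6 · α(2k_1e_1), where m_γ=(γ|m)/(γ|k_1e_1). -/

import Mathlib

open scoped BigOperators

namespace QTorus

/-- σ(m,n) = ∏_{i<j} q_{ji}^{m_j n_i}. -/
noncomputable def qsigma (d : ℕ) (Q : Matrix (Fin d) (Fin d) ℂ) (m n : Fin d → ℤ) : ℂ :=
  ∏ i : Fin d, ∏ j : Fin d, if i < j then Q j i ^ (m j * n i) else 1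

/-- The radical subgroup R = {m | σ(m,n)=σ(n,m) for all n}. -/
def Rset (d : ℕ) (Q : Matrix (Fin d) (Fin d) ℂ) : Set (Fin d → ℤ) :=
  {m | ∀ n : Fin d → ℤ, qsigma d Q m n = qsigma d Q n m}

/-- (γ|m) = ∑ γ_i m_i. -/
noncomputable def ip (d : ℕ) (γ : Fin d → ℂ) (m : Fin d → ℤ) : ℂ :=
  ∑ i : Fin d, γ i * (m i : ℂ)

/-- The underlying vector space of g(γ,Q): formal ℂ-linear combinations of basis
vectors indexed by ℤ^d. -/
abbrev g (d : ℕ) := (Fin d → ℤ) →₀ ℂ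

/-- The basis vector L_m. -/
noncomputable def L (d : ℕ) (m : Fin d → ℤ) : g d := Finsupp.single m 1

/-- Hypotheses on the matrix Q: nonzero entries, q_{ii}=1, q_{ij}q_{ji}=1. -/
def QOk (d : ℕ) (Q : Matrix (Fin d) (Fin d) ℂ) : Prop :=
  (∀ i, Q i i = 1) ∧ (∀ i j, Q i j * Q j i = 1) ∧ (∀ i j, Q i j ≠ 0)

/-- γ is generic: γ_1,…,γ_d are linearly independent over ℚ. -/
def Generic (d : ℕ) (γ : Fin d → ℂ) : Prop := LinearIndependent ℚ γ

open Classical in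
/-- Structure constants of g(γ,Q): [L_m, L_n] = sc(m,n) • L_{m+n}. -/
noncomputable def sc (d : ℕ) (Q : Matrix (Fin d) (Fin d) ℂ) (γ : Fin d → ℂ)
    (m n : Fin d → ℤ) : ℂ :=
  if m ∈ Rset d Q then
    (if n ∈ Rset d Q then qsigma d Q m n * ip d γ (n - m)
     else qsigma d Q m n * ip d γ n)
  else
    (if n ∈ Rset d Q then -(qsigma d Q n m * ip d γ m)
     else qsigma d Q m n - qsigma d Q n m)

/-- The bracket of g(γ,Q), as the bilinear extension of
[L_m, L_n] = sc(m,n) • L_{m+n}. -/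
noncomputable def br (d : ℕ) (Q : Matrix (Fin d) (Fin d) ℂ) (γ : Fin d → ℂ)
    (x y : g d) : g d :=
  x.sum fun m a => y.sum fun n b => Finsupp.single (m + n) (a * b * sc d Q γ m n)

/-- A Lie algebra automorphism of g(γ,Q): a linear equivalence preserving the bracket. -/
def IsAut (d : ℕ) (Q : Matrix (Fin d) (Fin d) ℂ) (γ : Fin d → ℂ)
    (θ : g d ≃ₗ[ℂ] g d) : Prop :=
  ∀ x y : g d, θ (br d Q γ x y) = br d Q γ (θ x) (θ y)

/-- A derivation of g(γ,Q). -/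
def IsDer (d : ℕ) (Q : Matrix (Fin d) (Fin d) ℂ) (γ : Fin d → ℂ)
    (D : g d →ₗ[ℂ] g d) : Prop :=
  ∀ x y : g d, D (br d Q γ x y) = br d Q γ (D x) y + br d Q γ x (D y)

open Classical in
/-- δ(n,R) = 1 if n ∈ R, 0 otherwise. -/
noncomputable def deltaR (d : ℕ) (Q : Matrix (Fin d) (Fin d) ℂ) (n : Fin d → ℤ) : ℕ :=
  if n ∈ Rset d Q then 1 else 0

/-- A 2-cocycle on g(γ,Q). -/
def IsCocycle (d : ℕ) (Q : Matrix (Fin d) (Fin d) ℂ) (γ : Fin d → ℂ)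
    (α : g d →ₗ[ℂ] g d →ₗ[ℂ] ℂ) : Prop :=
  (∀ x y : g d, α x y = - α y x) ∧
  (∀ x y z : g d,
    α (br d Q γ x y) z + α (br d Q γ z x) y + α (br d Q γ y z) x = 0)

/-- i ↔ j is one of the exceptional index pairs (2l-1,2l) (1-based) of the rational
normal form. Here indices are 0-based. -/
def OffDiagPair (z : ℕ) (i j : ℕ) : Prop :=
  ∃ l : ℕ, l < z ∧ ((i = 2 * l ∧ j = 2 * l + 1) ∨ (i = 2 * l + 1 ∧ j = 2 * l))

/-- Q is in rational normal form with parameters z and k_1,…,k_d (0-based indexing: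
the paper's pair (2i-1,2i) is the Lean pair (2l, 2l+1) with l = i-1). -/
def IsRNF (d : ℕ) (Q : Matrix (Fin d) (Fin d) ℂ) (z : ℕ) (k : Fin d → ℕ) : Prop :=
  0 < z ∧ 2 * z ≤ d ∧
  (∀ i j : Fin d, ¬ OffDiagPair z i.val j.val → Q i j = 1) ∧
  (∀ (l : ℕ) (_ : l < z) (hi : 2 * l < d) (hj : 2 * l + 1 < d),
      IsPrimitiveRoot (Q ⟨2 * l, hi⟩ ⟨2 * l + 1, hj⟩) (k ⟨2 * l, hi⟩) ∧
      Q ⟨2 * l + 1, hj⟩ ⟨2 * l, hi⟩ = (Q ⟨2 * l, hi⟩ ⟨2 * l + 1, hj⟩)⁻¹ ∧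
      k ⟨2 * l + 1, hj⟩ = k ⟨2 * l, hi⟩ ∧
      1 < k ⟨2 * l, hi⟩) ∧
  (∀ (i : ℕ) (_ : i + 1 < 2 * z) (h1 : i < d) (h2 : i + 1 < d),
      k ⟨i + 1, h2⟩ ∣ k ⟨i, h1⟩) ∧
  (∀ i : Fin d, 2 * z ≤ i.val → k i = 1)

/-- The vector k_1 e_1 ∈ ℤ^d. -/
noncomputable def k1e1 (d : ℕ) (k : Fin d → ℕ) (hd : 0 < d) : Fin d → ℤ :=
  Pi.single ⟨0, hd⟩ (k ⟨0, hd⟩ : ℤ)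

/-- A 2-cocycle is normalized if α(L_{m-k₁e₁}, L_{k₁e₁})=0 for m ∈ R, m ≠ 2k₁e₁,
α(L_0, L_{2k₁e₁})=0, α(L_0, L_s)=0 for s ∉ R, and α(L_m,L_n)=0 whenever m+n ≠ 0. -/
def IsNormalized (d : ℕ) (Q : Matrix (Fin d) (Fin d) ℂ) (k : Fin d → ℕ) (hd : 0 < d)
    (α : g d →ₗ[ℂ] g d →ₗ[ℂ] ℂ) : Prop :=
  (∀ m ∈ Rset d Q, m ≠ 2 • k1e1 d k hd →
      α (L d (m - k1e1 d k hd)) (L d (k1e1 d k hd)) = 0) ∧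
  α (L d 0) (L d (2 • k1e1 d k hd)) = 0 ∧
  (∀ s, s ∉ Rset d Q → α (L d 0) (L d s) = 0) ∧
  (∀ m n : Fin d → ℤ, m + n ≠ 0 → α (L d m) (L d n) = 0)

/-- The degree derivation ∂_i, acting by ∂_i(L_m) = m_i L_m. -/
noncomputable def deg (d : ℕ) (i : Fin d) (y : g d) : g d :=
  y.sum fun m a => Finsupp.single m ((m i : ℂ) * a)

open Classical in
/-- The 2-cocycle α₁: α₁(L_m,L_n) = δ_{m+n,0}((m_γ)³-m_γ)/12 for m ∈ R, 0 otherwise,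
where m_γ = (γ|m)/(γ|k₁e₁). -/
noncomputable def alpha1 (d : ℕ) (Q : Matrix (Fin d) (Fin d) ℂ) (γ : Fin d → ℂ)
    (k : Fin d → ℕ) (hd : 0 < d) (x y : g d) : ℂ :=
  x.sum fun m a => y.sum fun n b => a * b *
    (if m ∈ Rset d Q ∧ m + n = 0 then
       ((ip d γ m / ip d γ (k1e1 d k hd)) ^ 3 - ip d γ m / ip d γ (k1e1 d k hd)) / 12
     else 0)

open Classical in
/-- The 2-cocycle α₂: α₂(L_r,L_s) = δ_{r+s,0} σ(r,-r)(γ|r)/(γ|k₁e₁) for r ∉ R,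
0 otherwise. -/
noncomputable def alpha2 (d : ℕ) (Q : Matrix (Fin d) (Fin d) ℂ) (γ : Fin d → ℂ)
    (k : Fin d → ℕ) (hd : 0 < d) (x y : g d) : ℂ :=
  x.sum fun m a => y.sum fun n b => a * b *
    (if m ∉ Rset d Q ∧ m + n = 0 then
       qsigma d Q m (-m) * (ip d γ m / ip d γ (k1e1 d k hd))
     else 0)

end QTorus

open QTorus

/-!
For `m, n ∈ R` in rational normal form `σ(m, n) = 1`, so the bracket of `L_m, L_n` is that of
the Witt algebra, `[L_m, L_n] = (γ|n - m) L_{m+n}`. The cocycle identity on `L_m, L_n, L_{-m-n}`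
is then a three-term relation for `f(m) = α(L_m, L_{-m})` on `R`, and together with
`f(k₁e₁) = 0` (from the normalization) it determines `f` from its value at `2k₁e₁`.
-/

/-- The relations at `(m, e)`, `(m + e, e)` and `(m, 2e)` involve `f m`, `f (m + e)`,
`f (m + 2e)` and `f (2e)`; eliminating the middle two leaves the cubic. -/
theorem eq_cubic_of_relation {A K : Type*} [AddCommGroup A] [Field K] [CharZero K]
    (φ : A →+ K) (f : A → K) {S : Set A} (hS : ∀ m ∈ S, ∀ n ∈ S, m + n ∈ S)
    (hrel : ∀ m ∈ S, ∀ n ∈ S,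
      (φ n - φ m) * f (m + n) - (2 * φ m + φ n) * f n + (φ m + 2 * φ n) * f m = 0)
    {e : A} (he : e ∈ S) (hφe : φ e ≠ 0) (hfe : f e = 0) {m : A} (hm : m ∈ S) :
    f m = ((φ m / φ e) ^ 3 - φ m / φ e) / 6 * f (2 • e) := by
  have E1 := hrel m hm e he
  have E2 := hrel (m + e) (hS m hm e he) e he
  have E3 := hrel m hm (e + e) (hS e he e he)
  rw [two_nsmul]
  simp only [map_add, hfe] at E1 E2 E3
  rw [add_assoc] at E2
  field_simp
  linear_combination (φ m * (φ m - φ e) * E3 - (φ m - 2 * φ e) * (φ m + 3 * φ e) * E1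
    - (φ m - φ e) * (φ m - 2 * φ e) * E2) / 2

namespace QTorus

variable {d : ℕ} {Q : Matrix (Fin d) (Fin d) ℂ} {γ : Fin d → ℂ} {z : ℕ} {k : Fin d → ℕ}

section Bicharacter

theorem ip_add (m n : Fin d → ℤ) : ip d γ (m + n) = ip d γ m + ip d γ n := by
  simp only [ip, Pi.add_apply, Int.cast_add, mul_add, Finset.sum_add_distrib]

noncomputable def ipHom (d : ℕ) (γ : Fin d → ℂ) : (Fin d → ℤ) →+ ℂ :=
  AddMonoidHom.mk' (ip d γ) ip_add

@[simp] theorem ipHom_apply (m : Fin d → ℤ) : ipHom d γ m = ip d γ m := rfl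

theorem qsigma_add_left (hQ : ∀ i j, Q i j ≠ 0) (m n p : Fin d → ℤ) :
    qsigma d Q (m + n) p = qsigma d Q m p * qsigma d Q n p := by
  simp only [qsigma, ← Finset.prod_mul_distrib]
  refine Finset.prod_congr rfl fun i _ => Finset.prod_congr rfl fun j _ => ?_
  split_ifs
  · rw [Pi.add_apply, add_mul, zpow_add₀ (hQ j i)]
  · rw [one_mul]

theorem qsigma_add_right (hQ : ∀ i j, Q i j ≠ 0) (m n p : Fin d → ℤ) :
    qsigma d Q p (m + n) = qsigma d Q p m * qsigma d Q p n := by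
  simp only [qsigma, ← Finset.prod_mul_distrib]
  refine Finset.prod_congr rfl fun i _ => Finset.prod_congr rfl fun j _ => ?_
  split_ifs
  · rw [Pi.add_apply, mul_add, zpow_add₀ (hQ j i)]
  · rw [one_mul]

theorem qsigma_neg_left (m p : Fin d → ℤ) : qsigma d Q (-m) p = (qsigma d Q m p)⁻¹ := by
  simp only [qsigma, ← Finset.prod_inv_distrib]
  refine Finset.prod_congr rfl fun i _ => Finset.prod_congr rfl fun j _ => ?_
  split_ifs
  · rw [Pi.neg_apply, neg_mul, zpow_neg]
  · rw [inv_one]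

theorem qsigma_neg_right (m p : Fin d → ℤ) : qsigma d Q p (-m) = (qsigma d Q p m)⁻¹ := by
  simp only [qsigma, ← Finset.prod_inv_distrib]
  refine Finset.prod_congr rfl fun i _ => Finset.prod_congr rfl fun j _ => ?_
  split_ifs
  · rw [Pi.neg_apply, mul_neg, zpow_neg]
  · rw [inv_one]

theorem add_mem_Rset (hQ : ∀ i j, Q i j ≠ 0) {m n : Fin d → ℤ}
    (hm : m ∈ Rset d Q) (hn : n ∈ Rset d Q) : m + n ∈ Rset d Q := fun p => by
  rw [qsigma_add_left hQ, qsigma_add_right hQ, hm p, hn p]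

theorem neg_mem_Rset {m : Fin d → ℤ} (hm : m ∈ Rset d Q) : -m ∈ Rset d Q := fun p => by
  rw [qsigma_neg_left, qsigma_neg_right, hm p]

theorem qsigma_single_right (m : Fin d → ℤ) (i : Fin d) :
    qsigma d Q m (Pi.single i 1) = ∏ j, if i < j then Q j i ^ m j else 1 := by
  rw [qsigma, Fintype.prod_eq_single i fun i' hi' => ?_]
  · simp only [Pi.single_eq_same, mul_one]
  · simp [Pi.single_eq_of_ne hi']

theorem qsigma_single_left (n : Fin d → ℤ) (j : Fin d) :
    qsigma d Q (Pi.single j 1) n = ∏ i, if i < j then Q j i ^ n i else 1 := by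
  rw [qsigma]
  refine Finset.prod_congr rfl fun i _ => ?_
  rw [Fintype.prod_eq_single j fun j' hj' => by simp [Pi.single_eq_of_ne hj']]
  simp only [Pi.single_eq_same, one_mul]

theorem qsigma_eq_one_of_zpow_left {m : Fin d → ℤ}
    (hm : ∀ i j, i < j → Q j i ^ m j = 1) (n : Fin d → ℤ) : qsigma d Q m n = 1 :=
  Finset.prod_eq_one fun i _ => Finset.prod_eq_one fun j _ => by
    split_ifs with hij
    · rw [zpow_mul, hm i j hij, one_zpow]
    · rfl

theorem qsigma_eq_one_of_zpow_right {n : Fin d → ℤ}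
    (hn : ∀ i j, i < j → Q j i ^ n i = 1) (m : Fin d → ℤ) : qsigma d Q m n = 1 :=
  Finset.prod_eq_one fun i _ => Finset.prod_eq_one fun j _ => by
    split_ifs with hij
    · rw [mul_comm, zpow_mul, hn i j hij, one_zpow]
    · rfl

end Bicharacter

section RationalNormalForm

theorem IsRNF.exists_pair_of_ne_one (hRNF : IsRNF d Q z k) {i j : Fin d} (hij : i < j)
    (h : Q j i ≠ 1) : ∃ l < z, i.val = 2 * l ∧ j.val = 2 * l + 1 := by
  by_contra hno
  refine h (hRNF.2.2.1 j i ?_)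
  rintro ⟨l, hl, ⟨hj, hi⟩ | ⟨hj, hi⟩⟩
  · exact absurd hij (by rw [Fin.lt_def]; omega)
  · exact hno ⟨l, hl, hi, hj⟩

theorem IsRNF.pow_k_eq_one (hRNF : IsRNF d Q z k) {i j : Fin d} (hij : i < j) :
    Q j i ^ k i = 1 := by
  by_cases h : Q j i = 1
  · rw [h, one_pow]
  obtain ⟨l, hl, hi, hj⟩ := hRNF.exists_pair_of_ne_one hij h
  have hi' : 2 * l < d := hi ▸ i.isLt
  have hj' : 2 * l + 1 < d := hj ▸ j.isLt
  obtain ⟨hprim, hinv, -⟩ := hRNF.2.2.2.1 l hl hi' hj'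
  rw [show i = ⟨2 * l, hi'⟩ from Fin.ext hi, show j = ⟨2 * l + 1, hj'⟩ from Fin.ext hj, hinv,
    inv_pow, hprim.pow_eq_one, inv_one]

theorem IsRNF.one_lt_k (hRNF : IsRNF d Q z k) (hd : 0 < d) : 1 < k ⟨0, hd⟩ :=
  (hRNF.2.2.2.1 0 hRNF.1 hd (by have := hRNF.1; have := hRNF.2.1; omega)).2.2.2

/-- For the pair `(i, j) = (2l, 2l+1)` of the normal form, `σ(m, e_i) = q_{ji}^{m_j}` while
`σ(e_i, m) = 1`. -/
theorem IsRNF.zpow_eq_one_of_mem (hRNF : IsRNF d Q z k) {m : Fin d → ℤ}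
    (hm : m ∈ Rset d Q) {i j : Fin d} (hij : i < j) : Q j i ^ m j = 1 := by
  by_contra h
  obtain ⟨l, -, hi, hj⟩ := hRNF.exists_pair_of_ne_one hij fun h1 => h (by rw [h1, one_zpow])
  have hleft : qsigma d Q m (Pi.single i 1) = Q j i ^ m j := by
    rw [qsigma_single_right, Fintype.prod_eq_single j fun j' hne => ?_, if_pos hij]
    split_ifs with hij'
    · by_contra h'
      obtain ⟨l', -, hi', hj'⟩ :=
        hRNF.exists_pair_of_ne_one hij' fun h1 => h' (by rw [h1, one_zpow])
      exact hne (Fin.ext (by omega))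
    · rfl
  have hright : qsigma d Q (Pi.single i 1) m = 1 := by
    rw [qsigma_single_left]
    refine Finset.prod_eq_one fun i' _ => ?_
    split_ifs with hi'
    · by_contra h'
      obtain ⟨l', -, -, hi''⟩ :=
        hRNF.exists_pair_of_ne_one hi' fun h1 => h' (by rw [h1, one_zpow])
      omega
    · rfl
  exact h (by rw [← hleft, hm, hright])

theorem IsRNF.qsigma_eq_one_of_mem (hRNF : IsRNF d Q z k) {m : Fin d → ℤ}
    (hm : m ∈ Rset d Q) (n : Fin d → ℤ) : qsigma d Q m n = 1 :=
  qsigma_eq_one_of_zpow_left (fun _ _ => hRNF.zpow_eq_one_of_mem hm) n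

theorem IsRNF.k1e1_mem (hRNF : IsRNF d Q z k) (hd : 0 < d) : k1e1 d k hd ∈ Rset d Q := by
  have hleft : ∀ i j : Fin d, i < j → Q j i ^ k1e1 d k hd j = 1 := fun i j hij => by
    rw [k1e1, Pi.single_eq_of_ne fun h0 => absurd (Fin.lt_def.mp (h0 ▸ hij)) (Nat.not_lt_zero _),
      zpow_zero]
  have hright : ∀ i j : Fin d, i < j → Q j i ^ k1e1 d k hd i = 1 := fun i j hij => by
    rw [k1e1, Pi.single_apply]
    split_ifs with hi
    · subst hi; exact_mod_cast hRNF.pow_k_eq_one hij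
    · rfl
  intro n
  rw [qsigma_eq_one_of_zpow_left hleft, qsigma_eq_one_of_zpow_right hright]

theorem ip_k1e1 (k : Fin d → ℕ) (hd : 0 < d) :
    ip d γ (k1e1 d k hd) = γ ⟨0, hd⟩ * k ⟨0, hd⟩ := by
  rw [ip, Fintype.sum_eq_single ⟨0, hd⟩ fun i hi => by simp [k1e1, Pi.single_eq_of_ne hi]]
  simp [k1e1]

theorem ip_k1e1_ne_zero (hRNF : IsRNF d Q z k) (hd : 0 < d) (hγ : Generic d γ) :
    ip d γ (k1e1 d k hd) ≠ 0 := by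
  rw [ip_k1e1]
  exact mul_ne_zero (hγ.ne_zero _) (Nat.cast_ne_zero.mpr (hRNF.one_lt_k hd).ne_bot)

end RationalNormalForm

section Cocycle

variable {α : g d →ₗ[ℂ] g d →ₗ[ℂ] ℂ}

theorem br_L (m n : Fin d → ℤ) : br d Q γ (L d m) (L d n) = sc d Q γ m n • L d (m + n) := by
  simp only [br, L, Finsupp.smul_single, smul_eq_mul, mul_one, one_mul,
    Finsupp.sum_single_index, zero_mul, mul_zero, Finsupp.single_zero]

theorem IsCocycle.cyclic_L (hα : IsCocycle d Q γ α) (a b c : Fin d → ℤ) :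
    sc d Q γ a b * α (L d (a + b)) (L d c) + sc d Q γ c a * α (L d (c + a)) (L d b)
      + sc d Q γ b c * α (L d (b + c)) (L d a) = 0 := by
  simpa only [br_L, map_smul, LinearMap.smul_apply, smul_eq_mul] using
    hα.2 (L d a) (L d b) (L d c)

theorem IsRNF.sc_of_mem (hRNF : IsRNF d Q z k) {m n : Fin d → ℤ}
    (hm : m ∈ Rset d Q) (hn : n ∈ Rset d Q) : sc d Q γ m n = ip d γ n - ip d γ m := by
  rw [sc, if_pos hm, if_pos hn, hRNF.qsigma_eq_one_of_mem hm, one_mul,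
    ← ipHom_apply, map_sub, ipHom_apply, ipHom_apply]

/-- The cocycle identity for `L_m, L_n, L_{-m-n}`, written for `f(m) = α(L_m, L_{-m})`. -/
theorem IsCocycle.relation (hQ : ∀ i j, Q i j ≠ 0) (hRNF : IsRNF d Q z k)
    (hα : IsCocycle d Q γ α) {m n : Fin d → ℤ} (hm : m ∈ Rset d Q) (hn : n ∈ Rset d Q) :
    (ip d γ n - ip d γ m) * α (L d (m + n)) (L d (-(m + n)))
      - (2 * ip d γ m + ip d γ n) * α (L d n) (L d (-n))
      + (ip d γ m + 2 * ip d γ n) * α (L d m) (L d (-m)) = 0 := by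
  have hmn : -(m + n) ∈ Rset d Q := neg_mem_Rset (add_mem_Rset hQ hm hn)
  have h := hα.cyclic_L m n (-(m + n))
  rw [show -(m + n) + m = -n by abel, show n + -(m + n) = -m by abel,
    hRNF.sc_of_mem hm hn, hRNF.sc_of_mem hmn hm, hRNF.sc_of_mem hn hmn,
    hα.1 (L d (-n)), hα.1 (L d (-m))] at h
  have hip : ip d γ (-(m + n)) = -(ip d γ m + ip d γ n) := by
    simp only [← ipHom_apply, map_neg, map_add]
  rw [hip] at h
  linear_combination h

theorem IsNormalized.apply_L_k1e1_neg (hRNF : IsRNF d Q z k) (hd : 0 < d)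
    (hα : IsCocycle d Q γ α) (hnorm : IsNormalized d Q k hd α) :
    α (L d (k1e1 d k hd)) (L d (-k1e1 d k hd)) = 0 := by
  have hne : (0 : Fin d → ℤ) ≠ 2 • k1e1 d k hd := fun h => by
    have h0 := congrFun h ⟨0, hd⟩
    simp only [k1e1, Pi.zero_apply, Pi.smul_apply, Pi.single_eq_same, nsmul_eq_mul] at h0
    have := hRNF.one_lt_k hd
    omega
  have h := hnorm.1 0 (fun n => by simp [qsigma]) hne
  rw [zero_sub] at h
  rw [hα.1, h, neg_zero]

end Cocycle

end QTorus

theorem stmt14_general (d : ℕ) (hd : 0 < d)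
    (Q : Matrix (Fin d) (Fin d) ℂ) (hQ : QOk d Q)
    (z : ℕ) (k : Fin d → ℕ) (hRNF : IsRNF d Q z k)
    (γ : Fin d → ℂ) (hγ : Generic d γ)
    (α : g d →ₗ[ℂ] g d →ₗ[ℂ] ℂ) (hα : IsCocycle d Q γ α)
    (hnorm : IsNormalized d Q k hd α) :
    ∀ m ∈ Rset d Q,
      α (L d m) (L d (-m)) =
        (((ip d γ m / ip d γ (k1e1 d k hd)) ^ 3 -
            ip d γ m / ip d γ (k1e1 d k hd)) / 6) *
          α (L d (2 • k1e1 d k hd)) (L d (-(2 • k1e1 d k hd))) := fun _ hm =>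
  eq_cubic_of_relation (ipHom d γ) (fun m => α (L d m) (L d (-m)))
    (fun _ hm _ hn => add_mem_Rset hQ.2.2 hm hn)
    (fun _ hm _ hn => hα.relation hQ.2.2 hRNF hm hn)
    (hRNF.k1e1_mem hd) (ip_k1e1_ne_zero hRNF hd hγ)
    (hnorm.apply_L_k1e1_neg hRNF hd hα) hm

/-- for Q in rational normal form, γ generic, and α a normalized
2-cocycle on g(γ,Q), writing α(m) = α(L_m, L_{-m}), for every m ∈ R one has
α(m) = ((m_γ)³ − m_γ)/6 · α(2k₁e₁), where m_γ = (γ|m)/(γ|k₁e₁). -/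
theorem stmt14 (d : ℕ) (hd1 : 1 < d) (hd : 0 < d)
    (Q : Matrix (Fin d) (Fin d) ℂ) (hQ : QOk d Q)
    (z : ℕ) (k : Fin d → ℕ) (hRNF : IsRNF d Q z k)
    (γ : Fin d → ℂ) (hγ : Generic d γ)
    (α : g d →ₗ[ℂ] g d →ₗ[ℂ] ℂ) (hα : IsCocycle d Q γ α)
    (hnorm : IsNormalized d Q k hd α) :
    ∀ m ∈ Rset d Q,
      α (L d m) (L d (-m)) =
        (((ip d γ m / ip d γ (k1e1 d k hd)) ^ 3 -
            ip d γ m / ip d γ (k1e1 d k hd)) / 6) *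
          α (L d (2 • k1e1 d k hd)) (L d (-(2 • k1e1 d k hd))) :=
  stmt14_general d hd Q hQ z k hRNF γ hγ α hα hnorm
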